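/- Let Δ₁, Δ₂ be real numbers (or integers) with Δ₂ ≥ 2 and Δ₁ ≥ 2Δ₂ + 3, and let L₆ be the symmetric 4×4 matrix with rows (Δ₁, -1, -1, 0), (-1, Δ₂, -1, -1), (-1, -1, Δ₂-1, -1), (0, -1, -1, Δ₂-1), and let L₇ be the symmetric 4×4 matrix with rows (Δ₁, -1, -1, 0), (-1, Δ₂, -1, -1), (-1, -1, Δ₂-1, 0), (0, -1, 0, Δ₂-1). Then the second largest eigenvalues of L₆ and of L₇ are each strictly greater than Δ₂ + 1/2. -/

import Mathlib

/-!
Evaluated at `Δ₂ + 1/2`, `Δ₂ + 2` and `Δ₁ + 1`, the characteristic polynomials of `L₆` and `L₇`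
have signs `+, -, +` as soon as `Δ₁ - Δ₂ ≥ 2` (after the shift `t ↦ t - Δ₂` these values depend
only on `Δ₁ - Δ₂`). By the intermediate value theorem each polynomial therefore has two distinct
roots above `Δ₂ + 1/2`, so its second largest root exceeds `Δ₂ + 1/2`.
-/

open Finset

/-- The `k`-th largest element (1-indexed) of a multiset of reals, with default `0`. -/
noncomputable def kthLargestR (s : Multiset ℝ) (k : ℕ) : ℝ :=
  (s.sort (· ≤ ·)).reverse.getD (k - 1) 0

/-- The second largest eigenvalue (i.e. second largest root, with multiplicity, of the
characteristic polynomial) of a square real matrix. -/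
noncomputable def secondLargestEig {k : ℕ} (M : Matrix (Fin k) (Fin k) ℝ) : ℝ :=
  kthLargestR M.charpoly.roots 2

lemma kthLargestR_two_eq {s : Multiset ℝ} (hs : 2 ≤ Multiset.card s) :
    kthLargestR s 2 = (s.sort (· ≤ ·))[Multiset.card s - 2]'(by simp; omega) := by
  have hlen : 1 < (s.sort (· ≤ ·)).reverse.length := by simp; omega
  rw [kthLargestR, List.getD_eq_getElem _ _ hlen, List.getElem_reverse]
  simp only [Multiset.length_sort]
  congr 1

lemma lt_kthLargestR_two {s : Multiset ℝ} {a r₁ r₂ : ℝ} (h₁ : r₁ ∈ s) (h₂ : r₂ ∈ s)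
    (hne : r₁ ≠ r₂) (ha₁ : a < r₁) (ha₂ : a < r₂) : a < kthLargestR s 2 := by
  have hsorted : (s.sort (· ≤ ·)).SortedLE := List.sortedLE_iff_pairwise.2 (s.pairwise_sort _)
  obtain ⟨i, hi, rfl⟩ := List.getElem_of_mem ((Multiset.mem_sort (r := (· ≤ ·))).2 h₁)
  obtain ⟨j, hj, rfl⟩ := List.getElem_of_mem ((Multiset.mem_sort (r := (· ≤ ·))).2 h₂)
  have hij : i ≠ j := by rintro rfl; exact hne rfl
  simp only [Multiset.length_sort] at hi hj
  rw [kthLargestR_two_eq (by omega)]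
  -- the smaller of the two indices is at most `card s - 2`
  rcases hij.lt_or_gt with h | h
  · exact ha₁.trans_le (hsorted.getElem_le_getElem_of_le (by omega))
  · exact ha₂.trans_le (hsorted.getElem_le_getElem_of_le (by omega))

open Polynomial in
lemma lt_kthLargestR_roots_two {p : ℝ[X]} {a b c : ℝ} (hab : a < b) (hbc : b < c)
    (ha : 0 < p.eval a) (hb : p.eval b < 0) (hc : 0 < p.eval c) :
    a < kthLargestR p.roots 2 := by
  have hp : p ≠ 0 := by rintro rfl; simp at ha
  have hcont : Continuous fun x ↦ p.eval x := p.continuous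
  obtain ⟨r₁, hr₁, hr₁0⟩ :=
    intermediate_value_Ioo' hab.le hcont.continuousOn (Set.mem_Ioo.2 ⟨hb, ha⟩)
  obtain ⟨r₂, hr₂, hr₂0⟩ :=
    intermediate_value_Ioo hbc.le hcont.continuousOn (Set.mem_Ioo.2 ⟨hb, hc⟩)
  exact lt_kthLargestR_two ((mem_roots hp).2 hr₁0) ((mem_roots hp).2 hr₂0)
    (hr₁.2.trans hr₂.1).ne hr₁.1 (hab.trans hr₂.1)

def L₆ (Δ₁ Δ₂ : ℝ) : Matrix (Fin 4) (Fin 4) ℝ :=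
  !![Δ₁, -1, -1, 0;
     -1, Δ₂, -1, -1;
     -1, -1, Δ₂ - 1, -1;
     0, -1, -1, Δ₂ - 1]

def L₇ (Δ₁ Δ₂ : ℝ) : Matrix (Fin 4) (Fin 4) ℝ :=
  !![Δ₁, -1, -1, 0;
     -1, Δ₂, -1, -1;
     -1, -1, Δ₂ - 1, 0;
     0, -1, 0, Δ₂ - 1]

lemma eval_charpoly_L₆ (Δ₁ Δ₂ t : ℝ) :
    (L₆ Δ₁ Δ₂).charpoly.eval t =
      (t - Δ₁) * ((t - Δ₂) * ((t - Δ₂) ^ 2 + 2 * (t - Δ₂) - 2))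
        - (2 * (t - Δ₂) - 1) * (t - Δ₂ + 1) := by
  rw [Matrix.eval_charpoly]
  simp [L₆, Matrix.det_succ_row_zero, Fin.sum_univ_succ, Fin.succAbove]
  ring

lemma eval_charpoly_L₇ (Δ₁ Δ₂ t : ℝ) :
    (L₇ Δ₁ Δ₂).charpoly.eval t =
      (t - Δ₁) * ((t - Δ₂ + 2) * (t - Δ₂ - 1) * (t - Δ₂ + 1))
        + 2 - (t - Δ₂) - 2 * (t - Δ₂) ^ 2 := by
  rw [Matrix.eval_charpoly]
  simp [L₇, Matrix.det_succ_row_zero, Fin.sum_univ_succ, Fin.succAbove]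
  ring

lemma secondLargestEig_L₆_gt {Δ₁ Δ₂ : ℝ} (h : 2 ≤ Δ₁ - Δ₂) :
    Δ₂ + 1 / 2 < secondLargestEig (L₆ Δ₁ Δ₂) := by
  obtain ⟨d, rfl⟩ : ∃ d, Δ₁ = Δ₂ + d := ⟨Δ₁ - Δ₂, by ring⟩
  replace h : 2 ≤ d := by linarith
  refine lt_kthLargestR_roots_two (b := Δ₂ + 2) (c := Δ₂ + d + 1) (by linarith) (by linarith)
    ?_ ?_ ?_ <;> rw [eval_charpoly_L₆] <;> ring_nf <;> nlinarith

lemma secondLargestEig_L₇_gt {Δ₁ Δ₂ : ℝ} (h : 2 ≤ Δ₁ - Δ₂) :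
    Δ₂ + 1 / 2 < secondLargestEig (L₇ Δ₁ Δ₂) := by
  obtain ⟨d, rfl⟩ : ∃ d, Δ₁ = Δ₂ + d := ⟨Δ₁ - Δ₂, by ring⟩
  replace h : 2 ≤ d := by linarith
  refine lt_kthLargestR_roots_two (b := Δ₂ + 2) (c := Δ₂ + d + 1) (by linarith) (by linarith)
    ?_ ?_ ?_ <;> rw [eval_charpoly_L₇] <;> ring_nf <;> nlinarith

/-- For reals `Δ₂ ≥ 2` and `Δ₁ ≥ 2Δ₂ + 3`, the second largest eigenvalues
of the matrices `L₆` and `L₇` are each strictly greater than `Δ₂ + 1/2`. -/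
theorem stmt17 (Δ₁ Δ₂ : ℝ) (h₂ : 2 ≤ Δ₂) (h₁ : 2 * Δ₂ + 3 ≤ Δ₁) :
    secondLargestEig !![Δ₁, -1, -1, 0;
                        -1, Δ₂, -1, -1;
                        -1, -1, Δ₂ - 1, -1;
                        0, -1, -1, Δ₂ - 1] > Δ₂ + 1 / 2 ∧
      secondLargestEig !![Δ₁, -1, -1, 0;
                          -1, Δ₂, -1, -1;
                          -1, -1, Δ₂ - 1, 0;
                          0, -1, 0, Δ₂ - 1] > Δ₂ + 1 / 2 := by
  have h : 2 ≤ Δ₁ - Δ₂ := by linarith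
  exact ⟨secondLargestEig_L₆_gt h, secondLargestEig_L₇_gt h⟩
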